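/- A finite nilpotent quandle Q is latin if and only if it is connected and superfaithful. -/

import Mathlib

/-- A left quasigroup: left multiplications are bijective. -/
class LQgrp (Q : Type*) where
  mul : Q → Q → Q
  ld : Q → Q → Q
  ld_mul : ∀ x y, ld x (mul x y) = y
  mul_ld : ∀ x y, mul x (ld x y) = y

namespace LQgrp

variable {Q : Type*} [LQgrp Q]

/-- Left multiplication as a permutation. -/
def LM (a : Q) : Equiv.Perm Q := ⟨mul a, ld a, ld_mul a, mul_ld a⟩

/-- The left multiplication group. -/
def LMlt (Q : Type*) [LQgrp Q] : Subgroup (Equiv.Perm Q) :=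
  Subgroup.closure (Set.range (LM : Q → Equiv.Perm Q))

/-- Subalgebras: subsets closed under both operations. -/
def IsSubalg (S : Set Q) : Prop :=
  (∀ a ∈ S, ∀ b ∈ S, mul a b ∈ S) ∧ (∀ a ∈ S, ∀ b ∈ S, ld a b ∈ S)

/-- The subalgebra generated by a set. -/
def Sg (X : Set Q) : Set Q := ⋂₀ {S | IsSubalg S ∧ X ⊆ S}

/-- A subset is connected if the group generated by its left translations
acts transitively on it. -/
def ConnectedSet (S : Set Q) : Prop :=
  ∀ a ∈ S, ∀ b ∈ S, ∃ h ∈ Subgroup.closure ((LM : Q → Equiv.Perm Q) '' S), h a = b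

/-- `Q` is connected if `LMlt Q` acts transitively. -/
def Connected (Q : Type*) [LQgrp Q] : Prop := ∀ a b : Q, ∃ h ∈ LMlt Q, h a = b

/-- `Q` is superconnected if every subalgebra is connected. -/
def Superconnected (Q : Type*) [LQgrp Q] : Prop :=
  ∀ S : Set Q, IsSubalg S → ConnectedSet S

/-- Faithfulness of a subalgebra: distinct elements have distinct left translations. -/
def FaithfulOn (S : Set Q) : Prop :=
  ∀ a ∈ S, ∀ b ∈ S, (∀ c ∈ S, mul a c = mul b c) → a = b

/-- `Q` is superfaithful if every subalgebra is faithful. -/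
def Superfaithful (Q : Type*) [LQgrp Q] : Prop :=
  ∀ S : Set Q, IsSubalg S → FaithfulOn S

/-- Latin: right multiplications are bijective. -/
def Latin (Q : Type*) [LQgrp Q] : Prop := ∀ a : Q, Function.Bijective (fun b => mul b a)

/-- The displacement group of a rack/quandle. -/
def Dis (Q : Type*) [LQgrp Q] : Subgroup (Equiv.Perm Q) :=
  Subgroup.closure {g : Equiv.Perm Q | ∃ a b : Q, g = LM a * (LM b)⁻¹}

end LQgrp

/-- A quandle: idempotent, left distributive left quasigroup. -/
class Qdl (Q : Type*) extends LQgrp Q where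
  idem : ∀ x : Q, mul x x = x
  ldist : ∀ x y z : Q, mul x (mul y z) = mul (mul x y) (mul x z)

/-- An involutory quandle. -/
class InvQdl (Q : Type*) extends Qdl Q where
  invol : ∀ x y : Q, mul x (mul x y) = y

open LQgrp

/-!
Induction on `|Q|`. Let `Z` be the center of `Dis(Q)`. Connectedness makes `Dis(Q)` transitive,
so `Z` acts semiregularly; `Z` is normalized by `LMlt(Q)`, so its orbits form a congruence and
`Q/Z` is a smaller connected quandle (nilpotency gives `Z ≠ 1`) whose displacement group, an image
of `Dis(Q)`, is nilpotent. Superfaithfulness descends because `w ↦ w⁻¹ L_a w L_a⁻¹` is injective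
on the finite group `Z`, hence onto. If `Q/Z` is latin and `a * c = b * c`, then `a = z b` with
`z ∈ Z`, so `L_b⁻¹ L_a ∈ Z` fixes `c`; hence `L_a = L_b` and `a = b`.
-/

open Equiv Subgroup

section PermGroup

variable {α : Type*}

theorem Subgroup.normalizer_le_normalizer_centralizer {G : Type*} [Group G] (H : Subgroup G) :
    normalizer (H : Set G) ≤ normalizer (centralizer (H : Set G) : Set G) := by
  rw [le_normalizer_iff]
  intro g hg z hz
  rw [mem_centralizer_iff] at hz ⊢
  intro h hh
  have hh' : g⁻¹ * h * g ∈ H := (mem_normalizer_iff''.mp hg h).mp hh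
  calc h * (g * z * g⁻¹) = g * ((g⁻¹ * h * g) * z) * g⁻¹ := by group
    _ = g * (z * (g⁻¹ * h * g)) * g⁻¹ := by rw [hz _ hh']
    _ = g * z * g⁻¹ * h := by group

theorem Group.IsNilpotent.of_le {G : Type*} [Group G] {H K : Subgroup G} (hKH : K ≤ H)
    [Group.IsNilpotent H] : Group.IsNilpotent K :=
  Group.nilpotent_of_mulEquiv (subgroupOfEquivOfLe hKH)

theorem eq_one_of_mem_centralizer_of_apply_eq {G : Subgroup (Perm α)}
    (hG : ∀ a b, ∃ g ∈ G, g a = b) {z : Perm α} (hz : z ∈ centralizer (G : Set (Perm α)))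
    {a : α} (ha : z a = a) : z = 1 := by
  ext b
  obtain ⟨g, hg, rfl⟩ := hG a b
  have := congrArg (· a) (mem_centralizer_iff.mp hz g hg)
  simpa [ha] using this.symm

theorem exists_mem_apply_eq_of_mem_closure {β : Type*} {S : Set (Perm α)}
    {K : Subgroup (Perm β)} (f : α → β) (hS : ∀ s ∈ S, ∀ x, ∃ t ∈ K, t (f x) = f (s x))
    {h : Perm α} (hh : h ∈ closure S) (x : α) : ∃ t ∈ K, t (f x) = f (h x) := by
  induction hh using closure_induction generalizing x with
  | mem s hs => exact hS s hs x
  | one => exact ⟨1, one_mem K, rfl⟩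
  | mul g k _ _ ihg ihk =>
    obtain ⟨t₂, ht₂, e₂⟩ := ihk x
    obtain ⟨t₁, ht₁, e₁⟩ := ihg (k x)
    exact ⟨t₁ * t₂, mul_mem ht₁ ht₂, by simp [e₂, e₁]⟩
  | inv g _ ih =>
    obtain ⟨t, ht, e⟩ := ih (g⁻¹ x)
    refine ⟨t⁻¹, inv_mem ht, ?_⟩
    rw [Perm.inv_eq_iff_eq, e]
    simp

variable {N : Subgroup (Perm α)}

theorem orbitRel_iff {x y : α} : MulAction.orbitRel N α x y ↔ ∃ z ∈ N, z y = x := by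
  simp [MulAction.orbitRel_apply, MulAction.mem_orbit_iff, Perm.smul_def]

theorem orbitRel_apply_of_mem_normalizer {g : Perm α} (hg : g ∈ normalizer (N : Set (Perm α)))
    {x y : α} (h : MulAction.orbitRel N α x y) : MulAction.orbitRel N α (g x) (g y) := by
  obtain ⟨z, hz, rfl⟩ := orbitRel_iff.mp h
  exact orbitRel_iff.mpr ⟨g * z * g⁻¹, (mem_normalizer_iff.mp hg z).mp hz, by simp⟩

theorem orbitRel_apply_iff_of_mem_normalizer {g : Perm α}
    (hg : g ∈ normalizer (N : Set (Perm α))) {x y : α} :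
    MulAction.orbitRel N α (g x) (g y) ↔ MulAction.orbitRel N α x y :=
  ⟨fun h => by simpa using orbitRel_apply_of_mem_normalizer (inv_mem hg) h,
    orbitRel_apply_of_mem_normalizer hg⟩

variable (N) in
def normalizerToPermQuotient :
    normalizer (N : Set (Perm α)) →* Perm (MulAction.orbitRel.Quotient N α) where
  toFun g := Quotient.congr g.1 fun _ _ => (orbitRel_apply_iff_of_mem_normalizer g.2).symm
  map_one' := Equiv.ext fun q => Quotient.inductionOn q fun _ => rfl
  map_mul' _ _ := Equiv.ext fun q => Quotient.inductionOn q fun _ => rfl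

theorem card_orbitRel_quotient_lt [Finite α] (hN : N ≠ ⊥) :
    Nat.card (MulAction.orbitRel.Quotient N α) < Nat.card α := by
  obtain ⟨⟨z, hz⟩, hz1⟩ := (ne_bot_iff_exists_ne_one).mp hN
  have hz1 : z ≠ 1 := fun h => hz1 (Subtype.ext h)
  obtain ⟨x, hx⟩ : ∃ x, z x ≠ x := by
    by_contra! h
    exact hz1 (Equiv.ext h)
  have hmk : Function.Surjective (Quotient.mk (MulAction.orbitRel N α)) := Quotient.mk_surjective
  refine (Nat.card_le_card_of_surjective _ hmk).lt_of_ne fun hcard => hx ?_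
  exact (hmk.bijective_of_nat_card_le hcard.ge).1 (Quotient.sound (orbitRel_iff.mpr ⟨z, hz, rfl⟩))

end PermGroup

namespace LQgrp

section LeftQuasigroup

variable {Q : Type*} [LQgrp Q]

@[simp] theorem LM_apply (a x : Q) : LM a x = mul a x := rfl

@[simp] theorem LM_symm_apply (a x : Q) : (LM a).symm x = ld a x := rfl

theorem LM_mem_LMlt (a : Q) : LM a ∈ LMlt Q := subset_closure ⟨a, rfl⟩

theorem LM_mul_inv_LM_mem_Dis (a b : Q) : LM a * (LM b)⁻¹ ∈ Dis Q :=
  subset_closure ⟨a, b, rfl⟩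

theorem Dis_le_LMlt : Dis Q ≤ LMlt Q := by
  rw [Dis, closure_le]
  rintro _ ⟨a, b, rfl⟩
  exact mul_mem (LM_mem_LMlt a) (inv_mem (LM_mem_LMlt b))

theorem Latin.connected (h : Latin Q) : Connected Q := fun a b => by
  obtain ⟨c, hc⟩ := (h a).surjective b
  exact ⟨LM c, LM_mem_LMlt c, hc⟩

end LeftQuasigroup

variable {Q : Type*} [Qdl Q]

theorem ld_self (x : Q) : ld x x = x := by
  simpa [Qdl.idem] using ld_mul x x

theorem Latin.eq_of_mul_eq (h : Latin Q) {a b : Q} (hab : mul a b = b) : b = a :=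
  ((h b).injective (hab.trans (Qdl.idem b).symm)).symm

theorem LM_mul_LM_mul_inv (a x : Q) : LM a * LM x * (LM a)⁻¹ = LM (mul a x) := by
  ext y
  simp only [Perm.mul_apply, Perm.coe_inv, LM_apply, LM_symm_apply]
  rw [Qdl.ldist, mul_ld]

theorem conj_LM_of_mem_LMlt {h : Perm Q} (hh : h ∈ LMlt Q) (x : Q) :
    h * LM x * h⁻¹ = LM (h x) := by
  induction hh using closure_induction generalizing x with
  | mem g hg =>
    obtain ⟨a, rfl⟩ := hg
    exact LM_mul_LM_mul_inv a x
  | one => simp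
  | mul g k _ _ ihg ihk =>
    rw [Perm.mul_apply, ← ihg, ← ihk]
    group
  | inv g _ ih =>
    rw [show LM x = g * LM (g⁻¹ x) * g⁻¹ by simp [ih]]
    group

theorem conj_inv_LM_of_mem_LMlt {h : Perm Q} (hh : h ∈ LMlt Q) (x : Q) :
    h * (LM x)⁻¹ * h⁻¹ = (LM (h x))⁻¹ := by
  rw [← conj_LM_of_mem_LMlt hh x]
  group

theorem LMlt_le_normalizer_Dis : LMlt Q ≤ normalizer (Dis Q : Set (Perm Q)) := by
  rw [Dis, le_normalizer_closure_iff]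
  rintro h hh _ ⟨a, b, rfl⟩
  refine subset_closure ⟨h a, h b, ?_⟩
  rw [← conj_LM_of_mem_LMlt hh, ← conj_inv_LM_of_mem_LMlt hh]
  group

theorem Connected.exists_mem_Dis_apply_eq (hc : Connected Q) (a b : Q) :
    ∃ g ∈ Dis Q, g a = b := by
  obtain ⟨h, hh, rfl⟩ := hc a b
  refine exists_mem_apply_eq_of_mem_closure id ?_ hh a
  rintro _ ⟨c, rfl⟩ x
  exact ⟨LM c * (LM x)⁻¹, LM_mul_inv_LM_mem_Dis c x, by simp [ld_self]⟩

section OrbitCongruence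

variable {N : Subgroup (Perm Q)}

theorem orbitRel_apply_congr {f : Q → Perm Q} (hf : ∀ x, f x ∈ LMlt Q)
    (hconj : ∀ h ∈ LMlt Q, ∀ x, h * f x * h⁻¹ = f (h x)) (hN : N ≤ LMlt Q)
    (hnorm : LMlt Q ≤ normalizer (N : Set (Perm Q))) {x x' y y' : Q}
    (hx : MulAction.orbitRel N Q x x') (hy : MulAction.orbitRel N Q y y') :
    MulAction.orbitRel N Q (f x y) (f x' y') := by
  obtain ⟨z₁, hz₁, rfl⟩ := orbitRel_iff.mp hx
  obtain ⟨z₂, hz₂, rfl⟩ := orbitRel_iff.mp hy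
  have hfz : f (z₁ x') (z₂ y') = z₁ (f x' ((z₁⁻¹ * z₂) y')) := by
    rw [← hconj z₁ (hN hz₁)]
    simp
  rw [hfz]
  refine (MulAction.orbitRel N Q).trans (orbitRel_iff.mpr ⟨z₁, hz₁, rfl⟩) ?_
  exact orbitRel_apply_of_mem_normalizer (hnorm (hf x'))
    (orbitRel_iff.mpr ⟨_, mul_mem (inv_mem hz₁) hz₂, rfl⟩)

theorem inv_LM_mul_LM_mem_of_orbitRel (hN : N ≤ LMlt Q)
    (hnorm : LMlt Q ≤ normalizer (N : Set (Perm Q))) {a b : Q}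
    (hab : MulAction.orbitRel N Q a b) : (LM b)⁻¹ * LM a ∈ N := by
  obtain ⟨z, hz, rfl⟩ := orbitRel_iff.mp hab
  have hconj : (LM b)⁻¹ * z * LM b ∈ N :=
    (mem_normalizer_iff''.mp (hnorm (LM_mem_LMlt b)) z).mp hz
  rw [← conj_LM_of_mem_LMlt (hN hz)]
  simpa only [mul_assoc] using mul_mem hconj (inv_mem hz)

end OrbitCongruence

variable (Q) in
def DisCenter : Subgroup (Perm Q) :=
  Dis Q ⊓ centralizer (Dis Q : Set (Perm Q))

theorem DisCenter_le_LMlt : DisCenter Q ≤ LMlt Q :=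
  inf_le_left.trans Dis_le_LMlt

theorem LMlt_le_normalizer_DisCenter :
    LMlt Q ≤ normalizer (DisCenter Q : Set (Perm Q)) := fun _ hh =>
  inf_normalizer_le_normalizer_inf
    ⟨LMlt_le_normalizer_Dis hh, normalizer_le_normalizer_centralizer _ (LMlt_le_normalizer_Dis hh)⟩

theorem DisCenter_ne_bot [Nontrivial Q] (hnil : Group.IsNilpotent (Dis Q))
    (hc : Connected Q) : DisCenter Q ≠ ⊥ := by
  obtain ⟨a, b, hab⟩ := exists_pair_ne Q
  obtain ⟨g, hg, hga⟩ := hc.exists_mem_Dis_apply_eq a b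
  have : Nontrivial (Dis Q) := (nontrivial_iff_ne_bot _).mpr fun h => by
    rw [h, mem_bot] at hg
    exact hab (by simpa [hg] using hga)
  have hcenter : (center (Dis Q)).map (Dis Q).subtype ≤ DisCenter Q := by
    rintro _ ⟨z, hz, rfl⟩
    exact ⟨z.2, mem_centralizer_iff.mpr fun g hg =>
      congrArg Subtype.val (mem_center_iff.mp hz ⟨g, hg⟩)⟩
  exact fun h => Group.IsNilpotent.center_ne_bot (Dis Q)
    ((map_eq_bot_iff_of_injective _ (subtype_injective _)).mp (le_bot_iff.mp (h ▸ hcenter)))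

namespace DisCenter

theorem eq_one_of_apply_eq (hc : Connected Q) {z : Perm Q} (hz : z ∈ DisCenter Q) {a : Q}
    (ha : z a = a) : z = 1 :=
  eq_one_of_mem_centralizer_of_apply_eq hc.exists_mem_Dis_apply_eq hz.2 ha

theorem eq_one_of_commute_LM (hc : Connected Q) (hfix : ∀ a b : Q, mul a b = b → b = a)
    {z : Perm Q} (hz : z ∈ DisCenter Q) {a : Q} (hcomm : Commute z (LM a)) : z = 1 := by
  refine eq_one_of_apply_eq hc hz (hfix a (z a) ?_)
  simpa [Qdl.idem] using (congrArg (· a) hcomm.eq).symm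

theorem exists_inv_mul_conj_eq [Finite Q] (hc : Connected Q)
    (hfix : ∀ a b : Q, mul a b = b → b = a) (a : Q) {z : Perm Q} (hz : z ∈ DisCenter Q) :
    ∃ w ∈ DisCenter Q, w⁻¹ * (LM a * w * (LM a)⁻¹) = z := by
  let ψ : DisCenter Q → DisCenter Q := fun w =>
    ⟨w.1⁻¹ * (LM a * w * (LM a)⁻¹), mul_mem (inv_mem w.2)
      ((mem_normalizer_iff.mp (LMlt_le_normalizer_DisCenter (LM_mem_LMlt a)) _).mp w.2)⟩
  have hψ : Function.Injective ψ := by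
    intro u v huv
    have h : u.1⁻¹ * (LM a * u * (LM a)⁻¹) = v.1⁻¹ * (LM a * v * (LM a)⁻¹) :=
      congrArg Subtype.val huv
    have hcomm : Commute (v.1 * u.1⁻¹) (LM a) :=
      calc v.1 * u.1⁻¹ * LM a = v * (u.1⁻¹ * (LM a * u * (LM a)⁻¹)) * LM a * u.1⁻¹ := by group
        _ = v * (v.1⁻¹ * (LM a * v * (LM a)⁻¹)) * LM a * u.1⁻¹ := by rw [h]
        _ = LM a * (v.1 * u.1⁻¹) := by group
    have hvu := eq_one_of_commute_LM hc hfix (mul_mem v.2 (inv_mem u.2)) hcomm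
    exact (Subtype.ext (mul_inv_eq_one.mp hvu)).symm
  obtain ⟨w, hw⟩ := Finite.injective_iff_surjective.mp hψ ⟨z, hz⟩
  exact ⟨w, w.2, congrArg Subtype.val hw⟩

end DisCenter

variable (Q) in
abbrev CentralQuot : Type _ :=
  MulAction.orbitRel.Quotient (DisCenter Q) Q

namespace CentralQuot

abbrev mk (x : Q) : CentralQuot Q := Quotient.mk _ x

theorem mk_surjective : Function.Surjective (mk : Q → CentralQuot Q) := Quotient.mk_surjective

theorem mk_eq_mk_iff {x y : Q} : mk x = mk y ↔ ∃ z ∈ DisCenter Q, z y = x :=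
  Quotient.eq.trans orbitRel_iff

instance : Qdl (CentralQuot Q) where
  mul := Quotient.map₂ mul fun _ _ hx _ _ hy =>
    orbitRel_apply_congr LM_mem_LMlt (fun _ hh => conj_LM_of_mem_LMlt hh) DisCenter_le_LMlt
      LMlt_le_normalizer_DisCenter hx hy
  ld := Quotient.map₂ ld fun _ _ hx _ _ hy =>
    orbitRel_apply_congr (f := fun x => (LM x)⁻¹) (fun x => inv_mem (LM_mem_LMlt x))
      (fun _ hh => conj_inv_LM_of_mem_LMlt hh) DisCenter_le_LMlt
      LMlt_le_normalizer_DisCenter hx hy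
  ld_mul := by rintro ⟨x⟩ ⟨y⟩; exact congrArg mk (ld_mul x y)
  mul_ld := by rintro ⟨x⟩ ⟨y⟩; exact congrArg mk (mul_ld x y)
  idem := by rintro ⟨x⟩; exact congrArg mk (Qdl.idem x)
  ldist := by rintro ⟨x⟩ ⟨y⟩ ⟨z⟩; exact congrArg mk (Qdl.ldist x y z)

theorem card_lt [Finite Q] [Nontrivial Q] (hnil : Group.IsNilpotent (Dis Q)) (hc : Connected Q) :
    Nat.card (CentralQuot Q) < Nat.card Q :=
  card_orbitRel_quotient_lt (DisCenter_ne_bot hnil hc)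

theorem connected (hc : Connected Q) : Connected (CentralQuot Q) := by
  intro p q
  obtain ⟨a, rfl⟩ := mk_surjective p
  obtain ⟨b, rfl⟩ := mk_surjective q
  obtain ⟨h, hh, rfl⟩ := hc a b
  refine exists_mem_apply_eq_of_mem_closure mk ?_ hh a
  rintro _ ⟨c, rfl⟩ x
  exact ⟨LM (mk c), LM_mem_LMlt _, rfl⟩

theorem isNilpotent_Dis (hnil : Group.IsNilpotent (Dis Q)) :
    Group.IsNilpotent (Dis (CentralQuot Q)) := by
  let φ := (normalizerToPermQuotient (DisCenter Q)).comp
    (inclusion (Dis_le_LMlt.trans LMlt_le_normalizer_DisCenter))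
  have : Group.IsNilpotent φ.range :=
    Group.nilpotent_of_surjective φ.rangeRestrict φ.rangeRestrict_surjective
  refine Group.IsNilpotent.of_le (H := φ.range) ?_
  rw [Dis, closure_le]
  rintro _ ⟨p, q, rfl⟩
  obtain ⟨a, rfl⟩ := mk_surjective p
  obtain ⟨b, rfl⟩ := mk_surjective q
  exact ⟨⟨LM a * (LM b)⁻¹, LM_mul_inv_LM_mem_Dis a b⟩, Equiv.ext fun x =>
    Quotient.inductionOn x fun _ => rfl⟩

theorem eq_of_mul_eq [Finite Q] (hc : Connected Q) (hfix : ∀ a b : Q, mul a b = b → b = a)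
    (p q : CentralQuot Q) (hpq : mul p q = q) : q = p := by
  obtain ⟨a, rfl⟩ := mk_surjective p
  obtain ⟨b, rfl⟩ := mk_surjective q
  obtain ⟨z, hz, hzb⟩ := mk_eq_mk_iff.mp hpq
  obtain ⟨w, hw, hwz⟩ := DisCenter.exists_inv_mul_conj_eq hc hfix a (inv_mem hz)
  have hwb : mul a (w b) = w b := by
    have hconj : LM a * w * (LM a)⁻¹ = w * z⁻¹ := by
      rw [← hwz]
      group
    calc mul a (w b) = (LM a * w * (LM a)⁻¹) (mul a b) := by simp [ld_mul]
      _ = w b := by rw [hconj, ← hzb]; simp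
  rw [← hfix a (w b) hwb]
  exact mk_eq_mk_iff.mpr ⟨w⁻¹, inv_mem hw, by simp⟩

end CentralQuot

theorem Latin.of_centralQuot [Finite Q] (hc : Connected Q)
    (hfix : ∀ a b : Q, mul a b = b → b = a) (h : Latin (CentralQuot Q)) : Latin Q := by
  intro c
  rw [← Finite.injective_iff_bijective]
  intro a b hab
  have hmk : CentralQuot.mk a = CentralQuot.mk b :=
    (h (CentralQuot.mk c)).injective (congrArg CentralQuot.mk hab)
  have hLM : (LM b)⁻¹ * LM a ∈ DisCenter Q :=
    inv_LM_mul_LM_mem_of_orbitRel DisCenter_le_LMlt LMlt_le_normalizer_DisCenter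
      (Quotient.exact hmk)
  have hLMab : LM a = LM b := by
    refine (inv_mul_eq_one.mp (DisCenter.eq_one_of_apply_eq hc hLM (a := c) ?_)).symm
    simp [hab, ld_mul]
  exact hfix b a (by rw [← LM_apply, ← hLMab, LM_apply, Qdl.idem])

theorem latin_of_connected_of_isNilpotent [Finite Q] (hnil : Group.IsNilpotent (Dis Q))
    (hc : Connected Q) (hfix : ∀ a b : Q, mul a b = b → b = a) : Latin Q := by
  induction hn : Nat.card Q using Nat.strong_induction_on generalizing Q with
  | _ n ih =>
    subst hn
    rcases subsingleton_or_nontrivial Q with hQ | hQ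
    · exact fun a => ⟨fun _ _ _ => Subsingleton.elim _ _, fun b => ⟨b, Subsingleton.elim _ _⟩⟩
    · exact Latin.of_centralQuot hc hfix <| ih _ (CentralQuot.card_lt hnil hc)
        (CentralQuot.isNilpotent_Dis hnil) (CentralQuot.connected hc)
        (CentralQuot.eq_of_mul_eq hc hfix) rfl

end LQgrp

/-- a finite nilpotent quandle is latin iff it is connected and
superfaithful (`Fix(L_a) = {a}` for all `a`). -/
theorem stmt12 {Q : Type*} [Qdl Q] [Finite Q]
    (hnil : Group.IsNilpotent ↥(Dis Q)) :
    Latin Q ↔ (Connected Q ∧ ∀ a : Q, {b : Q | mul a b = b} = {a}) := by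
  have fix_iff : (∀ a : Q, {b : Q | mul a b = b} = {a}) ↔ ∀ a b : Q, mul a b = b → b = a := by
    refine forall_congr' fun a => ⟨fun h b hb => ?_, fun h => ?_⟩
    · simpa [h] using (show b ∈ {b : Q | mul a b = b} from hb)
    · exact Set.ext fun b => ⟨h b, by rintro rfl; exact Qdl.idem b⟩
  rw [fix_iff]
  exact ⟨fun h => ⟨h.connected, fun _ _ => h.eq_of_mul_eq⟩,
    fun ⟨hc, hfix⟩ => latin_of_connected_of_isNilpotent hnil hc hfix⟩
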